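/- arXiv:2106.09066 — 2 statements merged into one kernel-verified Lean document; each statement's English description precedes it below -/
import Mathlib

section
/- For a uniform stick-breaking process on [0,T] with lengths t_n = T·ℓ_n, and any measurable function f : ℝ₊ → ℝ₊, the expected sum E[Σ_{n=1}^∞ f(t_n)] equals ∫_0^T f(t)/t dt (both sides possibly infinite). -/
open MeasureTheory ProbabilityTheory Filter Set ENNReal NNReal

/-- Stick lengths of the uniform stick-breaking process on `[0,1]` built from the
iid uniform sequence `V`: `stick V n` is `ℓ_{n+1} = V_{n+1} ∏_{i ≤ n} (1 - V_i)`
(with 0-based indexing). -/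
noncomputable def stick {Ω : Type*} (V : ℕ → Ω → ℝ) (n : ℕ) (ω : Ω) : ℝ :=
  V n ω * ∏ i ∈ Finset.range n, (1 - V i ω)

namespace StickBreakingAux

/-- The density `(-log t)^n / n!` of the product of `n+1` iid uniforms. -/
noncomputable def rho (n : ℕ) (t : ℝ) : ℝ≥0∞ := ENNReal.ofReal ((-Real.log t)^n / n.factorial)

lemma rho_measurable (n : ℕ) : Measurable (rho n) :=
  (((Real.measurable_log.neg.pow measurable_const).div_const _)).ennreal_ofReal

lemma measurable_one_sub : Measurable (fun u : ℝ => 1 - u) :=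
  measurable_id.const_sub 1

lemma map_one_sub : Measure.map (fun u : ℝ => 1 - u) (volume.restrict (Ioo (0:ℝ) 1))
    = volume.restrict (Ioo (0:ℝ) 1) := by
  have hm : Measure.map (fun u : ℝ => 1 - u) volume = volume :=
    (Measure.measurePreserving_sub_left (volume : Measure ℝ) 1).map_eq
  have hpre : (fun u : ℝ => 1 - u) ⁻¹' (Ioo (0:ℝ) 1) = Ioo (0:ℝ) 1 := by
    ext x
    simp only [mem_preimage, mem_Ioo]
    constructor <;> rintro ⟨h1, h2⟩ <;> constructor <;> linarith
  conv_rhs => rw [← hm, Measure.restrict_map measurable_one_sub measurableSet_Ioo, hpre]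

lemma lintegral_scale {g : ℝ → ℝ≥0∞} (hg : Measurable g) {c : ℝ} (hc : 0 < c) :
    ∫⁻ u in Ioo (0:ℝ) 1, g (c * u) = ENNReal.ofReal c⁻¹ * ∫⁻ t in Ioo 0 c, g t := by
  have hpre : (fun x : ℝ => c * x) ⁻¹' (Ioo 0 c) = Ioo (0:ℝ) 1 := by
    rw [preimage_const_mul_Ioo₀ _ _ hc, zero_div, div_self hc.ne']
  have hmap : Measure.map (fun x : ℝ => c * x) (volume.restrict (Ioo (0:ℝ) 1))
      = ENNReal.ofReal c⁻¹ • volume.restrict (Ioo 0 c) := by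
    rw [← hpre, ← Measure.restrict_map (measurable_const_mul c) measurableSet_Ioo,
      Real.map_volume_mul_left hc.ne', Measure.restrict_smul,
      abs_of_pos (inv_pos.2 hc)]
  calc ∫⁻ u in Ioo (0:ℝ) 1, g (c * u)
      = ∫⁻ x, g x ∂(Measure.map (fun x : ℝ => c * x) (volume.restrict (Ioo (0:ℝ) 1))) :=
        (lintegral_map hg (measurable_const_mul c)).symm
    _ = ENNReal.ofReal c⁻¹ * ∫⁻ t in Ioo 0 c, g t := by
        rw [hmap, lintegral_smul_measure, smul_eq_mul]

lemma lintegral_rho_tail (n : ℕ) {t : ℝ} (ht : t ∈ Ioo (0:ℝ) 1) :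
    ∫⁻ y in Ioo t 1, ENNReal.ofReal ((-Real.log y)^n / n.factorial / y) = rho (n+1) t := by
  obtain ⟨ht0, ht1⟩ := ht
  set F : ℝ → ℝ := fun y => (-Real.log y)^n / n.factorial / y with hF
  set G : ℝ → ℝ := fun y => -((-Real.log y)^(n+1) / (n+1).factorial) with hG
  have hcont : ContinuousOn F (Icc t 1) := by
    apply ContinuousOn.div
    · exact ((Real.continuousOn_log.mono (fun y hy => by
        simp only [mem_compl_iff, mem_singleton_iff]
        exact ne_of_gt (lt_of_lt_of_le ht0 hy.1))).neg.pow n).div_const _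
    · exact continuousOn_id
    · exact fun y hy => ne_of_gt (lt_of_lt_of_le ht0 hy.1)
  have hderiv : ∀ y ∈ Icc t 1, HasDerivAt G (F y) y := by
    intro y hy
    have hy0 : 0 < y := lt_of_lt_of_le ht0 hy.1
    have h1 : HasDerivAt (fun y : ℝ => -Real.log y) (-y⁻¹) y :=
      (Real.hasDerivAt_log hy0.ne').neg
    have h2 : HasDerivAt (fun y : ℝ => (-Real.log y)^(n+1))
        ((n+1 : ℕ) * (-Real.log y)^n * (-y⁻¹)) y := by
      simpa using (h1.fun_pow (n+1))
    have h3 := ((h2.div_const ((n+1).factorial : ℝ)).fun_neg)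
    convert h3 using 1
    · rfl
    · rfl
    have hfac : ((n+1).factorial : ℝ) = (n+1) * n.factorial := by
      rw [Nat.factorial_succ]; push_cast; ring
    show (-Real.log y)^n / n.factorial / y = _
    rw [hfac]
    push_cast
    field_simp
  have hint : IntervalIntegrable F volume t 1 := by
    apply ContinuousOn.intervalIntegrable
    rwa [uIcc_of_le ht1.le]
  have hFTC := intervalIntegral.integral_eq_sub_of_hasDerivAt
    (fun y hy => hderiv y (by rwa [uIcc_of_le ht1.le] at hy)) hint
  have hval : ∫ y in t..1, F y = (-Real.log t)^(n+1) / (n+1).factorial := by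
    rw [hFTC]
    simp [hG, Real.log_one]
  have hnn : 0 ≤ᵐ[volume.restrict (Ioo t 1)] F := by
    refine (ae_restrict_iff' measurableSet_Ioo).2 (ae_of_all _ (fun y hy => ?_))
    have hy0 : 0 < y := lt_trans ht0 hy.1
    have : 0 ≤ -Real.log y := by
      simpa using Real.log_nonpos hy0.le hy.2.le
    positivity
  have hInt : Integrable F (volume.restrict (Ioo t 1)) :=
    (hint.1.mono_set (by simpa [Set.uIoc_of_le ht1.le] using Set.Ioo_subset_Ioc_self)).integrable
  rw [← ofReal_integral_eq_lintegral_ofReal hInt hnn]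
  have : ∫ y in Ioo t 1, F y = ∫ y in t..1, F y := by
    rw [intervalIntegral.integral_of_le ht1.le, ← integral_Ioc_eq_integral_Ioo]
  rw [this, hval, rho]

lemma swap_lemma {Φ : ℝ → ℝ → ℝ≥0∞} (hΦ : Measurable (Function.uncurry Φ)) :
    ∫⁻ y in Ioo (0:ℝ) 1, ∫⁻ t in Ioo 0 y, Φ t y
      = ∫⁻ t in Ioo (0:ℝ) 1, ∫⁻ y in Ioo t 1, Φ t y := by
  set S : Set (ℝ × ℝ) := {p | 0 < p.1 ∧ p.1 < p.2 ∧ p.2 < 1} with hSdef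
  have hS : MeasurableSet S := by
    apply MeasurableSet.inter
    · exact measurableSet_lt measurable_const measurable_fst
    · exact (measurableSet_lt measurable_fst measurable_snd).inter
        (measurableSet_lt measurable_snd measurable_const)
  set K : ℝ × ℝ → ℝ≥0∞ := S.indicator (Function.uncurry Φ) with hKdef
  have hK : Measurable K := hΦ.indicator hS
  have h1 : ∀ y : ℝ, (Ioo (0:ℝ) 1).indicator (fun y => ∫⁻ t in Ioo 0 y, Φ t y) y
      = ∫⁻ t, K (t, y) := by
    intro y
    by_cases hy : y ∈ Ioo (0:ℝ) 1
    · rw [indicator_of_mem hy, ← lintegral_indicator measurableSet_Ioo]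
      congr 1
      funext t
      by_cases ht : t ∈ Ioo 0 y
      · rw [indicator_of_mem ht, hKdef, indicator_of_mem]
        · rfl
        · exact ⟨ht.1, ht.2, hy.2⟩
      · rw [indicator_of_notMem ht, hKdef, indicator_of_notMem]
        rintro ⟨a, b, c⟩
        exact ht ⟨a, b⟩
    · rw [indicator_of_notMem hy]
      symm
      have hz : ∀ t : ℝ, K (t, y) = 0 := by
        intro t
        rw [hKdef, indicator_of_notMem]
        rintro ⟨a, b, c⟩
        simp only [mem_Ioo, not_and] at hy
        exact hy (lt_trans a b) c
      simp [hz]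
  have h2 : ∀ t : ℝ, (Ioo (0:ℝ) 1).indicator (fun t => ∫⁻ y in Ioo t 1, Φ t y) t
      = ∫⁻ y, K (t, y) := by
    intro t
    by_cases ht : t ∈ Ioo (0:ℝ) 1
    · rw [indicator_of_mem ht, ← lintegral_indicator measurableSet_Ioo]
      congr 1
      funext y
      by_cases hy : y ∈ Ioo t 1
      · rw [indicator_of_mem hy, hKdef, indicator_of_mem]
        · rfl
        · exact ⟨ht.1, hy.1, hy.2⟩
      · rw [indicator_of_notMem hy, hKdef, indicator_of_notMem]
        rintro ⟨a, b, c⟩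
        exact hy ⟨b, c⟩
    · rw [indicator_of_notMem ht]
      symm
      have hz : ∀ y : ℝ, K (t, y) = 0 := by
        intro y
        rw [hKdef, indicator_of_notMem]
        rintro ⟨a, b, c⟩
        exact ht ⟨a, lt_trans b c⟩
      simp [hz]
  calc ∫⁻ y in Ioo (0:ℝ) 1, ∫⁻ t in Ioo 0 y, Φ t y
      = ∫⁻ y, (Ioo (0:ℝ) 1).indicator (fun y => ∫⁻ t in Ioo 0 y, Φ t y) y := by
        rw [lintegral_indicator measurableSet_Ioo]
    _ = ∫⁻ y, ∫⁻ t, K (t, y) := by simp_rw [h1]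
    _ = ∫⁻ t, ∫⁻ y, K (t, y) := by
        exact lintegral_lintegral_swap (f := fun y t => K (t, y))
          ((hK.comp measurable_swap).aemeasurable)
    _ = ∫⁻ t, (Ioo (0:ℝ) 1).indicator (fun t => ∫⁻ y in Ioo t 1, Φ t y) t := by simp_rw [h2]
    _ = ∫⁻ t in Ioo (0:ℝ) 1, ∫⁻ y in Ioo t 1, Φ t y := by
        rw [lintegral_indicator measurableSet_Ioo]

lemma key_step (n : ℕ) {h : ℝ → ℝ≥0∞} (hh : Measurable h) :
    ∫⁻ y in Ioo (0:ℝ) 1, (∫⁻ u in Ioo (0:ℝ) 1, h (u * y)) * rho n y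
      = ∫⁻ t in Ioo (0:ℝ) 1, h t * rho (n+1) t := by
  have hmeasΦ : Measurable (Function.uncurry
      (fun t y : ℝ => h t * (ENNReal.ofReal y⁻¹ * rho n y))) := by
    apply Measurable.mul
    · exact hh.comp measurable_fst
    · exact ((measurable_snd.inv).ennreal_ofReal.mul ((rho_measurable n).comp measurable_snd))
  calc ∫⁻ y in Ioo (0:ℝ) 1, (∫⁻ u in Ioo (0:ℝ) 1, h (u * y)) * rho n y
      = ∫⁻ y in Ioo (0:ℝ) 1, ∫⁻ t in Ioo 0 y, h t * (ENNReal.ofReal y⁻¹ * rho n y) := by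
        refine setLIntegral_congr_fun measurableSet_Ioo (fun y hy => ?_)
        have h1 : ∫⁻ u in Ioo (0:ℝ) 1, h (u * y) = ∫⁻ u in Ioo (0:ℝ) 1, h (y * u) := by
          simp_rw [mul_comm]
        rw [h1, lintegral_scale hh hy.1,
          lintegral_mul_const _ hh]
        ring
    _ = ∫⁻ t in Ioo (0:ℝ) 1, ∫⁻ y in Ioo t 1, h t * (ENNReal.ofReal y⁻¹ * rho n y) :=
        swap_lemma hmeasΦ
    _ = ∫⁻ t in Ioo (0:ℝ) 1, h t * rho (n+1) t := by
        refine setLIntegral_congr_fun measurableSet_Ioo (fun t ht => ?_)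
        rw [lintegral_const_mul (f := fun y => ENNReal.ofReal y⁻¹ * rho n y) _ ((measurable_inv.ennreal_ofReal).mul (rho_measurable n))]
        congr 1
        have : ∫⁻ y in Ioo t 1, ENNReal.ofReal y⁻¹ * rho n y
            = ∫⁻ y in Ioo t 1, ENNReal.ofReal ((-Real.log y)^n / n.factorial / y) := by
          refine setLIntegral_congr_fun measurableSet_Ioo (fun y hy => ?_)
          have hy0 : 0 < y := lt_trans ht.1 hy.1
          rw [rho, ← ENNReal.ofReal_mul (inv_nonneg.2 hy0.le)]
          rw [inv_mul_eq_div, div_div]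
        rw [this, lintegral_rho_tail n ht]

section Prob

variable {Ω : Type*} [MeasurableSpace Ω] {P : Measure Ω} [IsProbabilityMeasure P]
  {V : ℕ → Ω → ℝ}

/-- Splitting a product of independent random variables, the second being uniform. -/
lemma lintegral_mul_indep {X Y : Ω → ℝ} (hX : Measurable X) (hY : Measurable Y)
    (hXY : IndepFun X Y P) (hYlaw : Measure.map Y P = volume.restrict (Ioo (0:ℝ) 1))
    {h : ℝ → ℝ≥0∞} (hh : Measurable h) :
    ∫⁻ ω, h (X ω * Y ω) ∂P = ∫⁻ ω, (∫⁻ u in Ioo (0:ℝ) 1, h (X ω * u)) ∂P := by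
  have hprob : IsProbabilityMeasure (Measure.map X P) :=
    Measure.isProbabilityMeasure_map hX.aemeasurable
  have hsf : SFinite (Measure.map Y P) := by rw [hYlaw]; infer_instance
  have hjoint := (indepFun_iff_map_prod_eq_prod_map_map hX.aemeasurable hY.aemeasurable).mp hXY
  have hmul : Measurable (fun p : ℝ × ℝ => h (p.1 * p.2)) :=
    hh.comp (measurable_fst.mul measurable_snd)
  have hinner : Measurable (fun x : ℝ => ∫⁻ u in Ioo (0:ℝ) 1, h (x * u)) :=
    Measurable.lintegral_prod_right (f := fun x u => h (x * u)) hmul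
  calc ∫⁻ ω, h (X ω * Y ω) ∂P
      = ∫⁻ p : ℝ × ℝ, h (p.1 * p.2) ∂(Measure.map (fun ω => (X ω, Y ω)) P) :=
        (lintegral_map hmul (hX.prodMk hY)).symm
    _ = ∫⁻ x, (∫⁻ y, h (x * y) ∂(Measure.map Y P)) ∂(Measure.map X P) := by
        rw [hjoint, lintegral_prod _ hmul.aemeasurable]
    _ = ∫⁻ x, (∫⁻ u in Ioo (0:ℝ) 1, h (x * u)) ∂(Measure.map X P) := by rw [hYlaw]
    _ = ∫⁻ ω, (∫⁻ u in Ioo (0:ℝ) 1, h (X ω * u)) ∂P := lintegral_map (μ := P) hinner hX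

variable (hmeas : ∀ n, Measurable (V n))
  (hindep : iIndepFun V P)
  (hunif : ∀ n, Measure.map (V n) P = volume.restrict (Set.Ioo (0:ℝ) 1))

include hmeas in
lemma W_measurable (n : ℕ) : Measurable (fun ω => ∏ i ∈ Finset.range n, (1 - V i ω)) :=
  Finset.measurable_prod _ (fun i _ => (hmeas i).const_sub 1)

omit [IsProbabilityMeasure P] in
include hmeas hindep in
lemma indep_W_V (n : ℕ) :
    IndepFun (fun ω => ∏ i ∈ Finset.range n, (1 - V i ω)) (V n) P := by
  classical
  have h := hindep.indepFun_finset (Finset.range n) {n}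
    (Finset.disjoint_singleton_right.mpr (by simp)) hmeas
  have hφ : Measurable (fun v : ↥(Finset.range n) → ℝ =>
      ∏ i : ↥(Finset.range n), (1 - v i)) :=
    Finset.measurable_prod _ (fun i _ => (measurable_pi_apply i).const_sub 1)
  have hψ : Measurable (fun v : ↥({n} : Finset ℕ) → ℝ =>
      v ⟨n, Finset.mem_singleton_self n⟩) := measurable_pi_apply _
  have h2 := h.comp hφ hψ
  have e1 : ((fun v : ↥(Finset.range n) → ℝ =>
        ∏ i : ↥(Finset.range n), (1 - v i)) ∘
        (fun a (i : ↥(Finset.range n)) => V i a))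
      = fun ω => ∏ i ∈ Finset.range n, (1 - V i ω) := by
    funext ω
    simp only [Function.comp_apply]
    rw [← Finset.prod_coe_sort (Finset.range n) (fun i => 1 - V i ω)]
  have e2 : ((fun v : ↥({n} : Finset ℕ) → ℝ => v ⟨n, Finset.mem_singleton_self n⟩) ∘
        (fun a (i : ↥({n} : Finset ℕ)) => V i a)) = V n := rfl
  rwa [e1, e2] at h2

omit [IsProbabilityMeasure P] in
include hmeas hunif in
lemma map_one_sub_V (n : ℕ) :
    Measure.map (fun ω => 1 - V n ω) P = volume.restrict (Ioo (0:ℝ) 1) := by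
  have : (fun ω => 1 - V n ω) = (fun u : ℝ => 1 - u) ∘ V n := rfl
  rw [this, ← Measure.map_map measurable_one_sub (hmeas n), hunif n, map_one_sub]

include hmeas hindep hunif in
/-- Law of the product `W (n+1) = ∏_{i ≤ n} (1 - V i)` of `n+1` iid uniforms. -/
lemma W_law : ∀ (n : ℕ) {h : ℝ → ℝ≥0∞}, Measurable h →
    ∫⁻ ω, h (∏ i ∈ Finset.range (n+1), (1 - V i ω)) ∂P
      = ∫⁻ y in Ioo (0:ℝ) 1, h y * rho n y := by
  intro n
  induction n with
  | zero =>
    intro h hh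
    have e : ∀ ω, ∏ i ∈ Finset.range 1, (1 - V i ω) = 1 - V 0 ω := by
      intro ω; simp
    simp_rw [e]
    have hmap : ∫⁻ ω, h (1 - V 0 ω) ∂P
        = ∫⁻ y, h y ∂(Measure.map (fun ω => 1 - V 0 ω) P) :=
      (lintegral_map hh ((hmeas 0).const_sub 1)).symm
    rw [hmap, map_one_sub_V hmeas hunif 0]
    refine setLIntegral_congr_fun measurableSet_Ioo (fun y hy => ?_)
    simp [rho]
  | succ n ih =>
    intro h hh
    have e : ∀ ω, ∏ i ∈ Finset.range (n+2), (1 - V i ω)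
        = (∏ i ∈ Finset.range (n+1), (1 - V i ω)) * (1 - V (n+1) ω) := by
      intro ω; rw [Finset.prod_range_succ]
    simp_rw [e]
    have hWm := W_measurable hmeas (n+1)
    have hind : IndepFun (fun ω => ∏ i ∈ Finset.range (n+1), (1 - V i ω))
        (fun ω => 1 - V (n+1) ω) P :=
      (indep_W_V hmeas hindep (n+1)).comp measurable_id measurable_one_sub
    rw [lintegral_mul_indep hWm ((hmeas (n+1)).const_sub 1) hind
      (map_one_sub_V hmeas hunif (n+1)) hh]
    have hinner : Measurable (fun x : ℝ => ∫⁻ u in Ioo (0:ℝ) 1, h (x * u)) :=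
      Measurable.lintegral_prod_right (f := fun x u => h (x * u))
        (hh.comp (measurable_fst.mul measurable_snd))
    rw [ih hinner]
    have : ∀ y : ℝ, (∫⁻ u in Ioo (0:ℝ) 1, h (y * u)) * rho n y
        = (∫⁻ u in Ioo (0:ℝ) 1, h (u * y)) * rho n y := by
      intro y; congr 1; simp_rw [mul_comm]
    simp_rw [this]
    exact key_step n hh

include hmeas hindep hunif in
/-- Law of `stick V n`: density `rho n` on `(0,1)`. -/
lemma stick_law (n : ℕ) {h : ℝ → ℝ≥0∞} (hh : Measurable h) :
    ∫⁻ ω, h (stick V n ω) ∂P = ∫⁻ t in Ioo (0:ℝ) 1, h t * rho n t := by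
  cases n with
  | zero =>
    have e : ∀ ω, stick V 0 ω = V 0 ω := by
      intro ω; simp [stick]
    simp_rw [e]
    have hmap : ∫⁻ ω, h (V 0 ω) ∂P = ∫⁻ y, h y ∂(Measure.map (V 0) P) :=
      (lintegral_map hh (hmeas 0)).symm
    rw [hmap, hunif 0]
    refine setLIntegral_congr_fun measurableSet_Ioo (fun y hy => ?_)
    simp [rho]
  | succ n =>
    have e : ∀ ω, stick V (n+1) ω
        = (∏ i ∈ Finset.range (n+1), (1 - V i ω)) * V (n+1) ω := by
      intro ω; rw [stick, mul_comm]
    simp_rw [e]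
    have hWm := W_measurable hmeas (n+1)
    rw [lintegral_mul_indep hWm (hmeas (n+1)) (indep_W_V hmeas hindep (n+1))
      (hunif (n+1)) hh]
    have hinner : Measurable (fun x : ℝ => ∫⁻ u in Ioo (0:ℝ) 1, h (x * u)) :=
      Measurable.lintegral_prod_right (f := fun x u => h (x * u))
        (hh.comp (measurable_fst.mul measurable_snd))
    rw [W_law hmeas hindep hunif n hinner]
    have : ∀ y : ℝ, (∫⁻ u in Ioo (0:ℝ) 1, h (y * u)) * rho n y
        = (∫⁻ u in Ioo (0:ℝ) 1, h (u * y)) * rho n y := by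
      intro y; congr 1; simp_rw [mul_comm]
    simp_rw [this]
    exact key_step n hh

end Prob

lemma tsum_rho {t : ℝ} (ht : t ∈ Ioo (0:ℝ) 1) :
    ∑' n, rho n t = (ENNReal.ofReal t)⁻¹ := by
  have hx : 0 ≤ -Real.log t := by
    simpa using Real.log_nonpos ht.1.le ht.2.le
  have h1 : ∑' n, rho n t = ENNReal.ofReal (∑' n : ℕ, (-Real.log t)^n / n.factorial) := by
    rw [ENNReal.ofReal_tsum_of_nonneg (fun n => by positivity)
      (Real.summable_pow_div_factorial _)]
    rfl
  rw [h1]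
  have h2 : (∑' n : ℕ, (-Real.log t)^n / n.factorial) = Real.exp (-Real.log t) := by
    rw [Real.exp_eq_exp_ℝ, NormedSpace.exp_eq_tsum_div]
  rw [h2, Real.exp_neg, Real.exp_log ht.1, ← ENNReal.ofReal_inv_of_pos ht.1]

end StickBreakingAux

open StickBreakingAux

/-- For a uniform stick-breaking process on `[0,T]` with lengths
`t_n = T ℓ_n` and any measurable `f : ℝ₊ → ℝ₊`,
`E[∑_{n=1}^∞ f(t_n)] = ∫_0^T f(t)/t dt` (both sides possibly infinite). -/
theorem stickBreaking_expected_sum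
    {Ω : Type*} [MeasurableSpace Ω] (P : Measure Ω) [IsProbabilityMeasure P]
    (V : ℕ → Ω → ℝ) (hmeas : ∀ n, Measurable (V n))
    (hindep : iIndepFun V P)
    (hunif : ∀ n, Measure.map (V n) P = volume.restrict (Set.Ioo (0:ℝ) 1))
    (T : ℝ) (hT : 0 < T) (f : ℝ → ℝ≥0∞) (hf : Measurable f) :
    ∫⁻ ω, ∑' n, f (T * stick V n ω) ∂P
      = ∫⁻ t in Set.Ioo (0:ℝ) T, f t / ENNReal.ofReal t := by
  have hstick_meas : ∀ n, Measurable (stick V n) := fun n =>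
    (hmeas n).mul (Finset.measurable_prod _ (fun i _ => (hmeas i).const_sub 1))
  have hh : Measurable (fun t : ℝ => f (T * t)) := hf.comp (measurable_const_mul T)
  have hL : ∫⁻ ω, ∑' n, f (T * stick V n ω) ∂P
      = ∫⁻ t in Ioo (0:ℝ) 1, f (T * t) * (ENNReal.ofReal t)⁻¹ := by
    have hm1 : ∀ n : ℕ, AEMeasurable (fun ω => f (T * stick V n ω)) P :=
      fun n => (hh.comp (hstick_meas n)).aemeasurable
    rw [lintegral_tsum hm1]
    have h1 : ∀ n, ∫⁻ ω, f (T * stick V n ω) ∂P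
        = ∫⁻ t in Ioo (0:ℝ) 1, f (T * t) * rho n t := fun n =>
      stick_law hmeas hindep hunif n hh
    simp_rw [h1]
    have hm2 : ∀ n : ℕ, AEMeasurable (fun t : ℝ => f (T * t) * rho n t)
        (volume.restrict (Ioo (0:ℝ) 1)) := fun n => ((hh.mul (rho_measurable n))).aemeasurable
    rw [← lintegral_tsum hm2]
    refine setLIntegral_congr_fun measurableSet_Ioo (fun t ht => ?_)
    rw [ENNReal.tsum_mul_left, tsum_rho ht]
  rw [hL]
  have hg : Measurable (fun t : ℝ => f t / ENNReal.ofReal t) :=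
    hf.div measurable_ofReal
  rw [show ∫⁻ t in Set.Ioo (0:ℝ) T, f t / ENNReal.ofReal t
      = ENNReal.ofReal T * (ENNReal.ofReal T⁻¹ * ∫⁻ t in Set.Ioo (0:ℝ) T, f t / ENNReal.ofReal t)
    from by
      rw [← mul_assoc, ← ENNReal.ofReal_mul hT.le, mul_inv_cancel₀ hT.ne', ENNReal.ofReal_one,
        one_mul]]
  rw [← lintegral_scale hg hT]
  have : ∫⁻ u in Ioo (0:ℝ) 1, f (T * u) / ENNReal.ofReal (T * u)
      = ∫⁻ u in Ioo (0:ℝ) 1, (ENNReal.ofReal T)⁻¹ * (f (T * u) * (ENNReal.ofReal u)⁻¹) := by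
    refine setLIntegral_congr_fun measurableSet_Ioo (fun u hu => ?_)
    rw [ENNReal.ofReal_mul hT.le, div_eq_mul_inv,
      ENNReal.mul_inv (Or.inl (by simp [hT])) (Or.inl (by simp))]
    ring
  have hmeas2 : Measurable (fun u : ℝ => f (T * u) * (ENNReal.ofReal u)⁻¹) :=
    hh.mul (measurable_ofReal.inv)
  rw [this, lintegral_const_mul _ hmeas2,
    ← mul_assoc, ENNReal.mul_inv_cancel (by simp [hT]) (by simp), one_mul]
end

section
/- For a uniform stick-breaking process on [0,T] and any q > 0, the limit as T → ∞ of E[Σ_{n∈𝕀_T} t_n^{−q}] equals 1/q, where 𝕀_T = {n : t_n ≥ 1}. -/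
open MeasureTheory ProbabilityTheory Filter Set ENNReal NNReal Topology

/-- Stick remainders: `srem V n = L_n = ∏_{i ≤ n} (1 - V_i)`. -/
noncomputable def srem {Ω : Type*} (V : ℕ → Ω → ℝ) (n : ℕ) (ω : Ω) : ℝ :=
  ∏ i ∈ Finset.range n, (1 - V i ω)


noncomputable def rho (n : ℕ) (x : ℝ) : ℝ≥0∞ :=
  ENNReal.ofReal ((-Real.log x) ^ n / n.factorial)

lemma measurable_rho (n : ℕ) : Measurable (rho n) := by
  unfold rho
  exact ENNReal.measurable_ofReal.comp
    (((Real.measurable_log.neg).pow_const n).div_const _)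

lemma rho_zero (x : ℝ) : rho 0 x = 1 := by simp [rho]

/-- FTC computation: `∫_w^1 (1/x) (log x - log w)^n / n! dx = (-log w)^{n+1}/(n+1)!`. -/
lemma lintegral_rho_inner (n : ℕ) {w : ℝ} (hw0 : 0 < w) (hw1 : w < 1) :
    ∫⁻ x in Set.Ioo w 1,
      ENNReal.ofReal (x⁻¹ * ((Real.log x - Real.log w) ^ n / n.factorial)) = rho (n + 1) w := by
  set h : ℝ → ℝ := fun x => x⁻¹ * ((Real.log x - Real.log w) ^ n / n.factorial) with hh
  have hcont : ContinuousOn h (Icc w 1) := by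
    apply ContinuousOn.mul
    · exact continuousOn_id.inv₀ fun x hx => ne_of_gt (lt_of_lt_of_le hw0 hx.1)
    · apply ContinuousOn.div_const
      apply ContinuousOn.pow
      exact (Real.continuousOn_log.mono fun x hx => ne_of_gt (lt_of_lt_of_le hw0 hx.1)).sub
        continuousOn_const
  have hint : IntegrableOn h (Ioo w 1) := (hcont.integrableOn_Icc).mono_set Ioo_subset_Icc_self
  have hnn : 0 ≤ᵐ[volume.restrict (Ioo w 1)] h := by
    refine (ae_restrict_iff' measurableSet_Ioo).2 (ae_of_all _ fun x hx => ?_)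
    have hx0 : 0 < x := lt_trans hw0 hx.1
    have hlog : 0 ≤ Real.log x - Real.log w := by
      have := Real.log_le_log hw0 (le_of_lt hx.1)
      linarith
    positivity
  rw [← ofReal_integral_eq_lintegral_ofReal hint hnn]
  have hval : ∫ x in Ioo w 1, h x = (-Real.log w) ^ (n + 1) / (n + 1).factorial := by
    have heq : ∫ x in Ioo w 1, h x = ∫ x in w..1, h x := by
      rw [intervalIntegral.integral_of_le hw1.le, integral_Ioc_eq_integral_Ioo]
    rw [heq]
    set φ : ℝ → ℝ := fun x => (Real.log x - Real.log w) ^ (n + 1) / (n + 1).factorial with hφ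
    have hderiv : ∀ x ∈ Set.uIcc w 1, HasDerivAt φ (h x) x := by
      intro x hx
      rw [Set.uIcc_of_le hw1.le] at hx
      have hx0 : 0 < x := lt_of_lt_of_le hw0 hx.1
      have hd1 : HasDerivAt (fun x => (Real.log x - Real.log w) ^ (n + 1))
          ((n + 1 : ℕ) * (Real.log x - Real.log w) ^ n * x⁻¹) x := by
        have := ((Real.hasDerivAt_log (ne_of_gt hx0)).sub_const (Real.log w)).fun_pow (n + 1)
        simpa using this
      have := hd1.div_const ((n + 1).factorial : ℝ)
      refine this.congr_deriv (Eq.symm ?_)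
      rw [hh]
      have hfac : ((n + 1).factorial : ℝ) = (n + 1 : ℕ) * (n.factorial : ℝ) := by
        rw [Nat.factorial_succ]; push_cast; ring
      rw [hfac]
      have h1 : (n.factorial : ℝ) ≠ 0 := by positivity
      field_simp
    have hii : IntervalIntegrable h volume w 1 := by
      rw [intervalIntegrable_iff_integrableOn_Ioo_of_le hw1.le]
      exact hint
    rw [intervalIntegral.integral_eq_sub_of_hasDerivAt hderiv hii]
    simp only [φ, Real.log_one, zero_sub, sub_self]
    rw [zero_pow (Nat.succ_ne_zero n), zero_div, sub_zero]
  rw [hval, rho]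

/-- Key convolution identity. -/
lemma key_conv (g : ℝ → ℝ≥0∞) (hg : Measurable g) (n : ℕ) :
    ∫⁻ x in Set.Ioo (0:ℝ) 1, ∫⁻ y in Set.Ioo (0:ℝ) 1, g (x * y) * rho n y
      = ∫⁻ w in Set.Ioo (0:ℝ) 1, g w * rho (n + 1) w := by
  classical
  set F : ℝ → ℝ → ℝ≥0∞ := fun x w => ENNReal.ofReal x⁻¹ * (g w * rho n (w / x)) with hF
  have hFmeas : Measurable (Function.uncurry F) := by
    apply Measurable.mul
    · exact ENNReal.measurable_ofReal.comp (measurable_fst.inv)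
    · exact (hg.comp measurable_snd).mul
        ((measurable_rho n).comp (measurable_snd.div measurable_fst))
  -- step 1: substitution in the inner integral
  have hsub : ∀ x ∈ Set.Ioo (0:ℝ) 1,
      (∫⁻ y in Set.Ioo (0:ℝ) 1, g (x * y) * rho n y) = ∫⁻ w in Set.Ioo 0 x, F x w := by
    intro x hx
    have hx0 : (0:ℝ) < x := hx.1
    have hxne : x ≠ 0 := ne_of_gt hx0
    have hptw : ∀ y : ℝ, g (x * y) * rho n y = (fun w => g w * rho n (w / x)) (x * y) := by
      intro y; simp only [mul_div_cancel_left₀ _ hxne]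
    have hmeas2 : Measurable fun w => g w * rho n (w / x) :=
      hg.mul ((measurable_rho n).comp (measurable_id.div_const x))
    have hmap : Measure.map (fun y => x * y) (volume.restrict (Set.Ioo (0:ℝ) 1))
        = ENNReal.ofReal x⁻¹ • volume.restrict (Set.Ioo 0 x) := by
      have hpre : (fun y => x * y) ⁻¹' (Set.Ioo (0:ℝ) x) = Set.Ioo 0 1 := by
        rw [Set.preimage_const_mul_Ioo₀ _ _ hx0, zero_div, div_self hxne]
      calc Measure.map (fun y => x * y) (volume.restrict (Set.Ioo (0:ℝ) 1))
          = Measure.map (fun y => x * y)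
              (volume.restrict ((fun y => x * y) ⁻¹' (Set.Ioo (0:ℝ) x))) := by rw [hpre]
        _ = (Measure.map (fun y => x * y) volume).restrict (Set.Ioo 0 x) :=
            (Measure.restrict_map (measurable_const_mul x) measurableSet_Ioo).symm
        _ = (ENNReal.ofReal |x⁻¹| • volume).restrict (Set.Ioo 0 x) := by
            rw [Real.map_volume_mul_left hxne]
        _ = ENNReal.ofReal x⁻¹ • volume.restrict (Set.Ioo 0 x) := by
            rw [Measure.restrict_smul, abs_of_pos (inv_pos.2 hx0)]
    calc ∫⁻ y in Set.Ioo (0:ℝ) 1, g (x * y) * rho n y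
        = ∫⁻ y in Set.Ioo (0:ℝ) 1, (fun w => g w * rho n (w / x)) (x * y) :=
          lintegral_congr fun y => hptw y
      _ = ∫⁻ w, g w * rho n (w / x)
            ∂(Measure.map (fun y => x * y) (volume.restrict (Set.Ioo (0:ℝ) 1))) :=
          (lintegral_map hmeas2 (measurable_const_mul x)).symm
      _ = ENNReal.ofReal x⁻¹ * ∫⁻ w in Set.Ioo 0 x, g w * rho n (w / x) := by
          rw [hmap, lintegral_smul_measure, smul_eq_mul]
      _ = ∫⁻ w in Set.Ioo 0 x, F x w := (lintegral_const_mul _ hmeas2).symm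
  rw [setLIntegral_congr_fun measurableSet_Ioo hsub]
  -- step 2: indicator form and Tonelli swap
  set Φ : ℝ → ℝ → ℝ≥0∞ := fun x w => ({p : ℝ × ℝ | p.2 < p.1}).indicator
      (fun p => F p.1 p.2) (x, w) with hΦ
  have hΦmeas : Measurable (Function.uncurry Φ) := by
    have : Function.uncurry Φ = ({p : ℝ × ℝ | p.2 < p.1}).indicator (Function.uncurry F) := by
      funext p; cases p; rfl
    rw [this]
    exact hFmeas.indicator (measurableSet_lt measurable_snd measurable_fst)
  have hstep2 : ∀ x ∈ Set.Ioo (0:ℝ) 1,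
      (∫⁻ w in Set.Ioo 0 x, F x w) = ∫⁻ w in Set.Ioo (0:ℝ) 1, Φ x w := by
    intro x hx
    have hsubset : Set.Ioo (0:ℝ) x ⊆ Set.Ioo (0:ℝ) 1 :=
      Set.Ioo_subset_Ioo le_rfl hx.2.le
    have : ∫⁻ w in Set.Ioo (0:ℝ) 1, Φ x w
        = ∫⁻ w in Set.Ioo (0:ℝ) 1, (Set.Ioo (0:ℝ) x).indicator (F x) w := by
      refine setLIntegral_congr_fun measurableSet_Ioo (fun w hw => ?_)
      by_cases h : w < x
      · have h1 : (x, w) ∈ {p : ℝ × ℝ | p.2 < p.1} := h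
        have h2 : w ∈ Set.Ioo (0:ℝ) x := ⟨hw.1, h⟩
        simp only [Φ, Set.indicator_of_mem h1, Set.indicator_of_mem h2]
      · have h2 : w ∉ Set.Ioo (0:ℝ) x := fun hc => h hc.2
        have h1 : ¬ ((x, w) ∈ {p : ℝ × ℝ | p.2 < p.1}) := h
        simp only [Φ, Set.indicator_of_notMem h1, Set.indicator_of_notMem h2]
    rw [this, lintegral_indicator measurableSet_Ioo, Measure.restrict_restrict measurableSet_Ioo,
      Set.inter_eq_self_of_subset_left hsubset]
  rw [setLIntegral_congr_fun measurableSet_Ioo hstep2]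
  rw [lintegral_lintegral_swap hΦmeas.aemeasurable]
  -- step 3: inner evaluation
  refine setLIntegral_congr_fun measurableSet_Ioo (fun w hw => ?_)
  have hw0 : (0:ℝ) < w := hw.1
  have hstep3 : ∫⁻ x in Set.Ioo (0:ℝ) 1, Φ x w = ∫⁻ x in Set.Ioo w 1, F x w := by
    have hsubset : Set.Ioo w 1 ⊆ Set.Ioo (0:ℝ) 1 := Set.Ioo_subset_Ioo hw0.le le_rfl
    have : ∫⁻ x in Set.Ioo (0:ℝ) 1, Φ x w
        = ∫⁻ x in Set.Ioo (0:ℝ) 1, (Set.Ioo w 1).indicator (fun x => F x w) x := by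
      refine setLIntegral_congr_fun measurableSet_Ioo (fun x hx => ?_)
      by_cases h : w < x
      · have h1 : (x, w) ∈ {p : ℝ × ℝ | p.2 < p.1} := h
        have h2 : x ∈ Set.Ioo w 1 := ⟨h, hx.2⟩
        simp only [Φ, Set.indicator_of_mem h1, Set.indicator_of_mem h2]
      · have h2 : x ∉ Set.Ioo w 1 := fun hc => h hc.1
        have h1 : ¬ ((x, w) ∈ {p : ℝ × ℝ | p.2 < p.1}) := h
        simp only [Φ, Set.indicator_of_notMem h1, Set.indicator_of_notMem h2]
    rw [this, lintegral_indicator measurableSet_Ioo, Measure.restrict_restrict measurableSet_Ioo,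
      Set.inter_eq_self_of_subset_left hsubset]
  rw [hstep3]
  have hrearr : ∀ x ∈ Set.Ioo w 1, F x w
      = g w * ENNReal.ofReal (x⁻¹ * ((Real.log x - Real.log w) ^ n / n.factorial)) := by
    intro x hx
    have hx0 : (0:ℝ) < x := lt_trans hw0 hx.1
    have hlog : -Real.log (w / x) = Real.log x - Real.log w := by
      rw [Real.log_div (ne_of_gt hw0) (ne_of_gt hx0)]; ring
    rw [hF]
    simp only [rho, hlog]
    rw [ENNReal.ofReal_mul (inv_nonneg.2 hx0.le)]
    ring
  rw [setLIntegral_congr_fun measurableSet_Ioo hrearr,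
    lintegral_const_mul _ (Measurable.ennreal_ofReal
      (f := fun x : ℝ => x⁻¹ * ((Real.log x - Real.log w) ^ n / n.factorial))
      ((measurable_inv.mul (((Real.measurable_log.sub measurable_const).pow_const n).div_const _)))),
    lintegral_rho_inner n hw0 hw.2]

lemma tsum_rho {w : ℝ} (hw0 : 0 < w) (hw1 : w < 1) :
    ∑' n, rho n w = ENNReal.ofReal w⁻¹ := by
  have hlog : 0 ≤ -Real.log w := by
    have := Real.log_nonpos hw0.le hw1.le
    linarith
  unfold rho
  rw [← ENNReal.ofReal_tsum_of_nonneg (fun n => by positivity)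
    (Real.summable_pow_div_factorial _)]
  congr 1
  have h1 : ∑' n : ℕ, (-Real.log w) ^ n / (n.factorial : ℝ) = Real.exp (-Real.log w) := by
    rw [Real.exp_eq_exp_ℝ, NormedSpace.exp_eq_tsum_div]
  rw [h1, Real.exp_neg, Real.exp_log hw0]

/-- Evaluation of the limiting integral for `T > 1`. -/
lemma eval_T {q : ℝ} (hq : 0 < q) {T : ℝ} (hT : 1 < T) :
    ∫⁻ w in Set.Ioo (0:ℝ) 1,
        (if 1 ≤ T * w then ENNReal.ofReal ((T * w) ^ (-q)) else 0) * ENNReal.ofReal w⁻¹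
      = ENNReal.ofReal ((1 - T ^ (-q)) / q) := by
  have hT0 : (0:ℝ) < T := lt_trans one_pos hT
  have hT0' : T ≠ 0 := ne_of_gt hT0
  have hTi0 : (0:ℝ) < T⁻¹ := inv_pos.2 hT0
  have hTi1 : T⁻¹ < 1 := inv_lt_one_of_one_lt₀ hT
  set h2 : ℝ → ℝ := fun w => (T * w) ^ (-q) * w⁻¹ with hh2
  have hsubset : Set.Ico T⁻¹ 1 ⊆ Set.Ioo (0:ℝ) 1 := fun w hw => ⟨lt_of_lt_of_le hTi0 hw.1, hw.2⟩
  -- rewrite integrand as indicator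
  have hind : ∀ w ∈ Set.Ioo (0:ℝ) 1,
      (if 1 ≤ T * w then ENNReal.ofReal ((T * w) ^ (-q)) else 0) * ENNReal.ofReal w⁻¹
        = (Set.Ico T⁻¹ 1).indicator (fun w => ENNReal.ofReal (h2 w)) w := by
    intro w hw
    by_cases h : 1 ≤ T * w
    · have hmem : w ∈ Set.Ico T⁻¹ 1 := by
        constructor
        · calc T⁻¹ = T⁻¹ * 1 := (mul_one _).symm
            _ ≤ T⁻¹ * (T * w) := mul_le_mul_of_nonneg_left h hTi0.le
            _ = w := by field_simp
        · exact hw.2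
      rw [if_pos h, Set.indicator_of_mem hmem, ← ENNReal.ofReal_mul (by positivity)]
    · have hmem : w ∉ Set.Ico T⁻¹ 1 := by
        intro hc
        apply h
        calc (1:ℝ) = T * T⁻¹ := (mul_inv_cancel₀ hT0').symm
        _ ≤ T * w := by
          apply mul_le_mul_of_nonneg_left hc.1 hT0.le
      rw [if_neg h, Set.indicator_of_notMem hmem, zero_mul]
  rw [setLIntegral_congr_fun measurableSet_Ioo hind,
    lintegral_indicator measurableSet_Ico, Measure.restrict_restrict measurableSet_Ico,
    Set.inter_eq_self_of_subset_left hsubset]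
  -- continuity and integrability of h2 on [T⁻¹, 1]
  have hcont : ContinuousOn h2 (Set.Icc T⁻¹ 1) := by
    apply ContinuousOn.mul
    · apply ContinuousOn.rpow_const
      · exact (continuousOn_const.mul continuousOn_id)
      · intro w hw
        left
        have : 0 < T * w := mul_pos hT0 (lt_of_lt_of_le hTi0 hw.1)
        exact ne_of_gt this
    · exact continuousOn_id.inv₀ fun w hw => ne_of_gt (lt_of_lt_of_le hTi0 hw.1)
  have hint : IntegrableOn h2 (Set.Ico T⁻¹ 1) :=
    (hcont.integrableOn_Icc).mono_set Set.Ico_subset_Icc_self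
  have hnn : 0 ≤ᵐ[volume.restrict (Set.Ico T⁻¹ 1)] h2 := by
    refine (ae_restrict_iff' measurableSet_Ico).2 (ae_of_all _ fun w hw => ?_)
    have hw0 : 0 < w := lt_of_lt_of_le hTi0 hw.1
    have : (0:ℝ) < T * w := mul_pos hT0 hw0
    positivity
  rw [← ofReal_integral_eq_lintegral_ofReal hint hnn]
  congr 1
  -- compute the real integral by FTC
  have heq : ∫ w in Set.Ico T⁻¹ 1, h2 w = ∫ w in T⁻¹..1, h2 w := by
    rw [MeasureTheory.integral_Ico_eq_integral_Ioo, intervalIntegral.integral_of_le hTi1.le,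
      integral_Ioc_eq_integral_Ioo]
  rw [heq]
  set ψ : ℝ → ℝ := fun w => (T * w) ^ (-q) / (-q) with hψ
  have hderiv : ∀ x ∈ Set.uIcc T⁻¹ 1, HasDerivAt ψ (h2 x) x := by
    intro x hx
    rw [Set.uIcc_of_le hTi1.le] at hx
    have hx0 : 0 < x := lt_of_lt_of_le hTi0 hx.1
    have hTx : 0 < T * x := mul_pos hT0 hx0
    have hbase : HasDerivAt (fun w => T * w) T x := by
      simpa using (hasDerivAt_id x).const_mul T
    have h1 : HasDerivAt (fun w => (T * w) ^ (-q)) ((-q) * (T * x) ^ (-q - 1) * T) x := by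
      have := (Real.hasDerivAt_rpow_const (p := -q) (Or.inl (ne_of_gt hTx))).comp x hbase
      exact this
    have h2' := h1.div_const (-q)
    refine h2'.congr_deriv (Eq.symm ?_)
    have hsplit : (T * x) ^ (-q - 1) = (T * x) ^ (-q) * (T * x)⁻¹ := by
      rw [show -q - 1 = -q + (-1) by ring, Real.rpow_add hTx, Real.rpow_neg_one]
    rw [hh2, hsplit]
    have hqne : q ≠ 0 := ne_of_gt hq
    field_simp
  have hii : IntervalIntegrable h2 volume T⁻¹ 1 :=
    (by rwa [Set.uIcc_of_le hTi1.le] : ContinuousOn h2 (Set.uIcc T⁻¹ 1)).intervalIntegrable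
  rw [intervalIntegral.integral_eq_sub_of_hasDerivAt hderiv hii]
  simp only [ψ]
  rw [mul_one, mul_inv_cancel₀ hT0', Real.one_rpow]
  have hqne : q ≠ 0 := ne_of_gt hq
  field_simp
  ring

section Prob
variable {Ω : Type*} [MeasurableSpace Ω] {P : Measure Ω} [IsProbabilityMeasure P]

lemma measurable_srem {V : ℕ → Ω → ℝ} (hmeas : ∀ n, Measurable (V n)) (n : ℕ) :
    Measurable (srem V n) := by
  unfold srem
  exact Finset.measurable_prod _ fun i _ => measurable_const.sub (hmeas i)

lemma measurable_stick {V : ℕ → Ω → ℝ} (hmeas : ∀ n, Measurable (V n)) (n : ℕ) :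
    Measurable (stick V n) := by
  unfold stick
  exact (hmeas n).mul (Finset.measurable_prod _ fun i _ => measurable_const.sub (hmeas i))

lemma map_one_sub_unif {X : Ω → ℝ} (hX : Measurable X)
    (h : P.map X = volume.restrict (Set.Ioo 0 1)) :
    P.map (fun ω => 1 - X ω) = volume.restrict (Set.Ioo (0:ℝ) 1) := by
  have hc : (fun ω => 1 - X ω) = (fun x : ℝ => 1 - x) ∘ X := rfl
  have hm : Measurable (fun x : ℝ => 1 - x) := measurable_const.sub measurable_id
  rw [hc, ← Measure.map_map hm hX, h]
  have hpre : (fun x : ℝ => 1 - x) ⁻¹' (Set.Ioo 0 1) = Set.Ioo 0 1 := by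
    ext x
    simp only [Set.mem_preimage, Set.mem_Ioo]
    constructor <;> rintro ⟨a, b⟩ <;> constructor <;> linarith
  have hvol : Measure.map (fun x : ℝ => 1 - x) volume = volume := by
    have := MeasureTheory.Measure.map_sub_left_eq_self (volume : Measure ℝ) 1
    simpa using this
  calc Measure.map (fun x : ℝ => 1 - x) (volume.restrict (Set.Ioo 0 1))
      = Measure.map (fun x : ℝ => 1 - x)
          (volume.restrict ((fun x : ℝ => 1 - x) ⁻¹' (Set.Ioo 0 1))) := by rw [hpre]
    _ = (Measure.map (fun x : ℝ => 1 - x) volume).restrict (Set.Ioo 0 1) :=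
        (Measure.restrict_map hm measurableSet_Ioo).symm
    _ = volume.restrict (Set.Ioo 0 1) := by rw [hvol]

lemma indep_srem {V : ℕ → Ω → ℝ} (hmeas : ∀ n, Measurable (V n))
    (hindep : iIndepFun V P) (n : ℕ) (φ : ℝ → ℝ) (hφ : Measurable φ) :
    IndepFun (fun ω => φ (V n ω)) (srem V n) P := by
  classical
  have hdisj : Disjoint ({n} : Finset ℕ) (Finset.range n) := by
    simp [Finset.disjoint_left]
  have h := hindep.indepFun_finset {n} (Finset.range n) hdisj hmeas
  have hn : n ∈ ({n} : Finset ℕ) := Finset.mem_singleton_self n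
  set φ1 : (({n} : Finset ℕ) → ℝ) → ℝ := fun v => φ (v ⟨n, hn⟩) with hφ1
  set φ2 : ({ x // x ∈ Finset.range n } → ℝ) → ℝ :=
    fun v => ∏ i : { x // x ∈ Finset.range n }, (1 - v i) with hφ2
  have hφ1m : Measurable φ1 := hφ.comp (measurable_pi_apply _)
  have hφ2m : Measurable φ2 :=
    Finset.measurable_prod Finset.univ fun i _ => measurable_const.sub (measurable_pi_apply i)
  have := h.comp hφ1m hφ2m
  have heq1 : (φ1 ∘ fun a (i : ({n} : Finset ℕ)) => V i a) = fun ω => φ (V n ω) := rfl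
  have heq2 : (φ2 ∘ fun a (i : (Finset.range n : Finset ℕ)) => V i a) = srem V n := by
    funext ω
    simp only [Function.comp_apply, hφ2, srem]
    exact Finset.prod_coe_sort (Finset.range n) (fun i => 1 - V i ω)
  rwa [heq1, heq2] at this

lemma mul_law {X Y : Ω → ℝ} (hX : Measurable X) (hY : Measurable Y)
    (hXY : IndepFun X Y P) (hXunif : P.map X = volume.restrict (Set.Ioo 0 1))
    {n : ℕ}
    (hYlaw : ∀ g : ℝ → ℝ≥0∞, Measurable g →
      ∫⁻ ω, g (Y ω) ∂P = ∫⁻ w in Set.Ioo (0:ℝ) 1, g w * rho n w)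
    (g : ℝ → ℝ≥0∞) (hg : Measurable g) :
    ∫⁻ ω, g (X ω * Y ω) ∂P = ∫⁻ w in Set.Ioo (0:ℝ) 1, g w * rho (n + 1) w := by
  haveI : IsProbabilityMeasure (P.map Y) := Measure.isProbabilityMeasure_map hY.aemeasurable
  have hmap := (indepFun_iff_map_prod_eq_prod_map_map hX.aemeasurable hY.aemeasurable).1 hXY
  have hgm : Measurable fun p : ℝ × ℝ => g (p.1 * p.2) :=
    hg.comp (measurable_fst.mul measurable_snd)
  calc ∫⁻ ω, g (X ω * Y ω) ∂P
      = ∫⁻ p : ℝ × ℝ, g (p.1 * p.2) ∂(P.map (fun ω => (X ω, Y ω))) :=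
        (lintegral_map hgm (hX.prodMk hY)).symm
    _ = ∫⁻ p : ℝ × ℝ, g (p.1 * p.2) ∂((P.map X).prod (P.map Y)) := by rw [hmap]
    _ = ∫⁻ x, ∫⁻ y, g (x * y) ∂(P.map Y) ∂(P.map X) := lintegral_prod _ hgm.aemeasurable
    _ = ∫⁻ x in Set.Ioo (0:ℝ) 1, ∫⁻ y, g (x * y) ∂(P.map Y) := by rw [hXunif]
    _ = ∫⁻ x in Set.Ioo (0:ℝ) 1, ∫⁻ w in Set.Ioo (0:ℝ) 1, g (x * w) * rho n w := by
        refine lintegral_congr fun x => ?_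
        rw [lintegral_map (hg.comp' (measurable_const_mul x)) hY]
        exact hYlaw (fun t => g (x * t)) (hg.comp' (measurable_const_mul x))
    _ = ∫⁻ w in Set.Ioo (0:ℝ) 1, g w * rho (n + 1) w := key_conv g hg n

lemma srem_law {V : ℕ → Ω → ℝ} (hmeas : ∀ n, Measurable (V n))
    (hindep : iIndepFun V P)
    (hunif : ∀ n, P.map (V n) = volume.restrict (Set.Ioo 0 1)) :
    ∀ n, ∀ g : ℝ → ℝ≥0∞, Measurable g →
      ∫⁻ ω, g (srem V (n + 1) ω) ∂P = ∫⁻ w in Set.Ioo (0:ℝ) 1, g w * rho n w := by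
  intro n
  induction n with
  | zero =>
    intro g hg
    have h1 : srem V 1 = fun ω => 1 - V 0 ω := by
      funext ω; simp [srem]
    rw [h1, ← lintegral_map (g := fun ω => 1 - V 0 ω) hg (measurable_const.sub (hmeas 0)),
      map_one_sub_unif (hmeas 0) (hunif 0)]
    exact lintegral_congr fun w => by rw [rho_zero, mul_one]
  | succ n ih =>
    intro g hg
    have h1 : ∫⁻ ω, g (srem V (n + 2) ω) ∂P
        = ∫⁻ ω, g ((1 - V (n + 1) ω) * srem V (n + 1) ω) ∂P := by
      refine lintegral_congr fun ω => ?_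
      congr 1
      simp only [srem, Finset.prod_range_succ]
      ring
    rw [h1]
    exact mul_law (measurable_const.sub (hmeas (n + 1))) (measurable_srem hmeas (n + 1))
      (indep_srem hmeas hindep (n + 1) (fun x => 1 - x)
        (measurable_const.sub measurable_id))
      (map_one_sub_unif (hmeas (n + 1)) (hunif (n + 1))) ih g hg

lemma stick_law {V : ℕ → Ω → ℝ} (hmeas : ∀ n, Measurable (V n))
    (hindep : iIndepFun V P)
    (hunif : ∀ n, P.map (V n) = volume.restrict (Set.Ioo 0 1))
    (n : ℕ) (g : ℝ → ℝ≥0∞) (hg : Measurable g) :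
    ∫⁻ ω, g (stick V n ω) ∂P = ∫⁻ w in Set.Ioo (0:ℝ) 1, g w * rho n w := by
  cases n with
  | zero =>
    have h1 : ∫⁻ ω, g (stick V 0 ω) ∂P = ∫⁻ ω, g (V 0 ω) ∂P := by
      refine lintegral_congr fun ω => ?_
      congr 1
      simp [stick]
    rw [h1, ← lintegral_map hg (hmeas 0), hunif 0]
    exact lintegral_congr fun w => by rw [rho_zero, mul_one]
  | succ n =>
    have h1 : ∫⁻ ω, g (stick V (n + 1) ω) ∂P
        = ∫⁻ ω, g (V (n + 1) ω * srem V (n + 1) ω) ∂P := lintegral_congr fun ω => rfl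
    rw [h1]
    exact mul_law (hmeas (n + 1)) (measurable_srem hmeas (n + 1))
      (indep_srem hmeas hindep (n + 1) id measurable_id)
      (hunif (n + 1)) (srem_law hmeas hindep hunif n) g hg

end Prob

/-- For a uniform stick-breaking process on `[0,T]` and any `q > 0`,
`E[∑_{n∈𝕀_T} t_n^{−q}] → 1/q` as `T → ∞`, where `𝕀_T = {n : t_n ≥ 1}`. -/
theorem stickBreaking_power_sum_limit
    {Ω : Type*} [MeasurableSpace Ω] (P : Measure Ω) [IsProbabilityMeasure P]
    (V : ℕ → Ω → ℝ) (hmeas : ∀ n, Measurable (V n))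
    (hindep : iIndepFun V P)
    (hunif : ∀ n, Measure.map (V n) P = volume.restrict (Set.Ioo (0:ℝ) 1))
    (q : ℝ) (hq : 0 < q) :
    Tendsto (fun T : ℝ => ∫⁻ ω, ∑' n,
        (if 1 ≤ T * stick V n ω then ENNReal.ofReal ((T * stick V n ω) ^ (-q)) else 0) ∂P)
      atTop (𝓝 (ENNReal.ofReal (1 / q))) := by
  have hunif' : ∀ n, P.map (V n) = volume.restrict (Set.Ioo 0 1) := hunif
  set G : ℝ → ℝ≥0∞ := fun t => if 1 ≤ t then ENNReal.ofReal (t ^ (-q)) else 0 with hG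
  have hGmeas : Measurable G := by
    apply Measurable.ite (measurableSet_le measurable_const measurable_id)
    · exact Measurable.ennreal_ofReal (by fun_prop : Measurable fun t : ℝ => t ^ (-q))
    · exact measurable_const
  have keyT : ∀ T : ℝ, 1 < T → (∫⁻ ω, ∑' n,
      (if 1 ≤ T * stick V n ω then ENNReal.ofReal ((T * stick V n ω) ^ (-q)) else 0) ∂P)
        = ENNReal.ofReal ((1 - T ^ (-q)) / q) := by
    intro T hT
    have hGT : Measurable fun t => G (T * t) := hGmeas.comp' (measurable_const_mul T)
    calc ∫⁻ ω, ∑' n,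
        (if 1 ≤ T * stick V n ω then ENNReal.ofReal ((T * stick V n ω) ^ (-q)) else 0) ∂P
        = ∫⁻ ω, ∑' n, G (T * stick V n ω) ∂P := rfl
      _ = ∑' n, ∫⁻ ω, G (T * stick V n ω) ∂P :=
          lintegral_tsum fun n =>
            (hGmeas.comp' (measurable_const.mul (measurable_stick hmeas n))).aemeasurable
      _ = ∑' n, ∫⁻ w in Set.Ioo (0:ℝ) 1, G (T * w) * rho n w :=
          tsum_congr fun n => stick_law hmeas hindep hunif' n (fun t => G (T * t)) hGT
      _ = ∫⁻ w in Set.Ioo (0:ℝ) 1, ∑' n, G (T * w) * rho n w :=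
          (lintegral_tsum fun n => (hGT.mul (measurable_rho n)).aemeasurable).symm
      _ = ∫⁻ w in Set.Ioo (0:ℝ) 1, G (T * w) * ENNReal.ofReal w⁻¹ := by
          refine setLIntegral_congr_fun measurableSet_Ioo (fun w hw => ?_)
          rw [ENNReal.tsum_mul_left, tsum_rho hw.1 hw.2]
      _ = ENNReal.ofReal ((1 - T ^ (-q)) / q) := eval_T hq hT
  have h4 : Tendsto (fun T : ℝ => ENNReal.ofReal ((1 - T ^ (-q)) / q)) atTop
      (𝓝 (ENNReal.ofReal (1 / q))) := by
    have h5 : Tendsto (fun T : ℝ => (1 - T ^ (-q)) / q) atTop (𝓝 ((1 - 0) / q)) :=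
      (tendsto_const_nhds.sub (tendsto_rpow_neg_atTop hq)).div_const q
    have := (ENNReal.continuous_ofReal.tendsto _).comp h5
    simpa [Function.comp_def] using this
  refine h4.congr' ?_
  filter_upwards [eventually_gt_atTop (1:ℝ)] with T hT
  exact (keyT T hT).symm
end
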